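/- arXiv:2301.10031 — 3 statements merged into one kernel-verified Lean document; each statement's English description precedes it below -/
import Mathlib

section
/- Let G be a finite simple graph, (T, β) a tree decomposition of G, and W ⊆ V(G). Then there exists a node x of T such that every connected component of the graph obtained from G by deleting the vertices of β(x) (and all incident edges) contains at most |W|/2 vertices of W. -/
/-!
If no bag is balanced, every node `x` has a neighbour `y` such that more than half of `W`
consists of vertices all of whose bags lie beyond the edge `xy` (a heavy arc): a heavy component
of `G - β x` is connected and avoids `β x`, so all its bags lie in one branch of `T - x`.
The arcs `xy` and `yx` cannot both be heavy, as they would carry disjoint majorities of `W`;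
so a heavy arc `yz` leaving `y` has `z ≠ x`, and its vertex set is contained in that of `xy`.
Fix a bag for every vertex. Every vertex counted by `yz` has its bag beyond `yz`, hence closer to
`z` than to `y`, so the sum of these distances strictly decreases along heavy arcs. As `T` may be
infinite, this descent in `ℕ`, rather than a cycle of arcs, gives the contradiction.
-/

open SimpleGraph

/-- `(T, β)` is a tree decomposition of the graph `G`: `T` is a tree, every vertex of `G`
is in some bag, both endpoints of every edge of `G` lie in a common bag, and for every
vertex of `G` the set of nodes of `T` whose bag contains it induces a connected subtree. -/
def IsTreeDecomposition {V ι : Type} (G : SimpleGraph V) (T : SimpleGraph ι)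
    (β : ι → Set V) : Prop :=
  T.IsTree ∧
  (∀ v : V, ∃ x : ι, v ∈ β x) ∧
  (∀ ⦃u v : V⦄, G.Adj u v → ∃ x : ι, u ∈ β x ∧ v ∈ β x) ∧
  (∀ v : V, (T.induce {x : ι | v ∈ β x}).Connected)

namespace SimpleGraph

variable {ι : Type*}

theorem Walk.reachable_deleteEdges_of_notMem_support {G : SimpleGraph ι} {u v x : ι}
    (p : G.Walk u v) (hx : x ∉ p.support) (y : ι) :
    (G.deleteEdges {s(x, y)}).Reachable u v :=
  reachable_deleteEdges_iff_exists_walk.mpr ⟨p, fun h => hx (p.fst_mem_support_of_mem_edges h)⟩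

theorem Reachable.mem_of_adj_closed {G : SimpleGraph ι} {S : Set ι}
    (hS : ∀ ⦃u v⦄, G.Adj u v → u ∈ S → v ∈ S) {u v : ι} (h : G.Reachable u v)
    (hu : u ∈ S) : v ∈ S := by
  obtain ⟨p⟩ := h
  induction p with
  | nil => exact hu
  | cons hadj _ ih => exact ih (hS hadj hu)

def farSide (T : SimpleGraph ι) (x y : ι) : Set ι :=
  {t | (T.deleteEdges {s(x, y)}).Reachable y t}

variable {T : SimpleGraph ι} {x y z t : ι}

theorem mem_farSide_of_dist_lt (hT : T.Connected) (h : T.dist y t < T.dist x t) :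
    t ∈ farSide T x y := by
  classical
  obtain ⟨p, hp⟩ := hT.exists_walk_length_eq_dist y t
  refine p.reachable_deleteEdges_of_notMem_support (fun hx => ?_) y
  have := dist_le (p.dropUntil x hx)
  have := p.length_dropUntil_le_length hx
  omega

theorem exists_adj_mem_farSide (hT : T.Connected) (hxt : x ≠ t) :
    ∃ y, T.Adj x y ∧ t ∈ farSide T x y := by
  obtain ⟨p, hp⟩ := hT.exists_walk_length_eq_dist x t
  cases p with
  | nil => exact absurd rfl hxt
  | @cons _ y _ hxy q =>
    refine ⟨y, hxy, mem_farSide_of_dist_lt hT ?_⟩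
    have := dist_le q
    simp only [Walk.length_cons] at hp
    omega

theorem IsTree.not_reachable_deleteEdges (hT : T.IsTree) (hxy : T.Adj x y) :
    ¬ (T.deleteEdges {s(x, y)}).Reachable x y :=
  isBridge_iff.mp (isAcyclic_iff_forall_adj_isBridge.mp hT.isAcyclic hxy)

theorem IsTree.not_mem_farSide_swap (hT : T.IsTree) (hxy : T.Adj x y) (ht : t ∈ farSide T x y) :
    t ∉ farSide T y x := by
  intro ht'
  rw [farSide, Set.mem_ofPred_eq, Sym2.eq_swap] at ht'
  exact hT.not_reachable_deleteEdges hxy (ht'.trans ht.symm)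

theorem IsTree.mem_farSide_or_mem_farSide_swap (hT : T.IsTree) (hxy : T.Adj x y) (t : ι) :
    t ∈ farSide T x y ∨ t ∈ farSide T y x := by
  rcases hT.dist_eq_dist_add_one_of_adj t hxy with h | h <;> simp only [dist_comm (u := t)] at h
  · exact Or.inl (mem_farSide_of_dist_lt hT.connected (by omega))
  · exact Or.inr (mem_farSide_of_dist_lt hT.connected (by omega))

theorem IsTree.dist_lt_of_mem_farSide (hT : T.IsTree) (hxy : T.Adj x y) (ht : t ∈ farSide T x y) :
    T.dist y t < T.dist x t := by
  rcases hT.dist_eq_dist_add_one_of_adj t hxy with h | h <;> simp only [dist_comm (u := t)] at h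
  · omega
  · exact absurd (mem_farSide_of_dist_lt hT.connected (by omega)) (hT.not_mem_farSide_swap hxy ht)

theorem IsTree.farSide_subset (hT : T.IsTree) (hxy : T.Adj x y) (hyz : T.Adj y z) (hzx : z ≠ x) :
    farSide T y z ⊆ farSide T x y := by
  classical
  rintro t ⟨p⟩
  have hy : y ∉ p.support := fun hy =>
    hT.not_reachable_deleteEdges hyz (Walk.reachable (p.takeUntil y hy)).symm
  have hzt : (T.deleteEdges {s(x, y)}).Reachable z t := by
    have := (p.mapLe (deleteEdges_le _)).reachable_deleteEdges_of_notMem_support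
      (by rwa [Walk.support_mapLe_eq_support]) x
    rwa [Sym2.eq_swap] at this
  have hyz' : (T.deleteEdges {s(x, y)}).Adj y z := by
    simp [hyz, hzx, hxy.ne']
  exact hyz'.reachable.trans hzt

theorem IsTree.mem_of_induce_connected (hT : T.IsTree) (hxy : T.Adj x y) {S : Set ι}
    (hS : (T.induce S).Connected) {t₁ t₂ : ι} (h₁ : t₁ ∈ S) (h₂ : t₂ ∈ S)
    (ht₁ : t₁ ∈ farSide T x y) (ht₂ : t₂ ∈ farSide T y x) : x ∈ S := by
  by_contra hx
  obtain ⟨p⟩ := hS.preconnected ⟨t₁, h₁⟩ ⟨t₂, h₂⟩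
  have hxp : x ∉ (p.map (Embedding.induce S).toHom).support := by
    simp only [Walk.support_map, List.mem_map, not_exists, not_and]
    rintro ⟨v, hv⟩ - rfl
    exact hx hv
  have h₁₂ := (p.map (Embedding.induce S).toHom).reachable_deleteEdges_of_notMem_support hxp y
  rw [farSide, Set.mem_ofPred_eq, Sym2.eq_swap] at ht₂
  exact hT.not_reachable_deleteEdges hxy (ht₂.trans (h₁₂.symm.trans ht₁.symm))

end SimpleGraph

section TreeDecomposition

variable {V ι : Type} {G : SimpleGraph V} {T : SimpleGraph ι} {β : ι → Set V} {x y z : ι}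

def verticesBeyond (T : SimpleGraph ι) (β : ι → Set V) (x y : ι) : Set V :=
  {v | ∀ t, v ∈ β t → t ∈ farSide T x y}

theorem verticesBeyond_subset (hT : T.IsTree) (hxy : T.Adj x y) (hyz : T.Adj y z) (hzx : z ≠ x) :
    verticesBeyond T β y z ⊆ verticesBeyond T β x y :=
  fun _ hv t ht => hT.farSide_subset hxy hyz hzx (hv t ht)

namespace IsTreeDecomposition

theorem mem_verticesBeyond_or (htd : IsTreeDecomposition G T β) {v : V}
    (hv : v ∉ β x) (hxy : T.Adj x y) :
    v ∈ verticesBeyond T β x y ∨ v ∈ verticesBeyond T β y x := by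
  by_contra! h
  simp only [verticesBeyond, Set.mem_ofPred_eq, not_forall] at h
  obtain ⟨⟨t₁, hvt₁, ht₁⟩, ⟨t₂, hvt₂, ht₂⟩⟩ := h
  have ht₁' := (htd.1.mem_farSide_or_mem_farSide_swap hxy t₁).resolve_left ht₁
  have ht₂' := (htd.1.mem_farSide_or_mem_farSide_swap hxy.symm t₂).resolve_left ht₂
  exact hv (htd.1.mem_of_induce_connected hxy (htd.2.2.2 v) hvt₂ hvt₁ ht₂' ht₁')

theorem disjoint_verticesBeyond (htd : IsTreeDecomposition G T β) (hxy : T.Adj x y) :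
    Disjoint (verticesBeyond T β x y) (verticesBeyond T β y x) := by
  refine Set.disjoint_left.mpr fun v hxy' hyx => ?_
  obtain ⟨t, ht⟩ := htd.2.1 v
  exact htd.1.not_mem_farSide_swap hxy (hxy' t ht) (hyx t ht)

theorem mem_verticesBeyond_of_adj (htd : IsTreeDecomposition G T β) (hxy : T.Adj x y)
    {u v : V} (huv : G.Adj u v) (hv : v ∉ β x) (hu : u ∈ verticesBeyond T β x y) :
    v ∈ verticesBeyond T β x y := by
  obtain ⟨t, hut, hvt⟩ := htd.2.2.1 huv
  exact (htd.mem_verticesBeyond_or hv hxy).resolve_right fun h =>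
    htd.1.not_mem_farSide_swap hxy (hu t hut) (h t hvt)

theorem exists_supp_subset_verticesBeyond (htd : IsTreeDecomposition G T β)
    (C : (G.induce (β x)ᶜ).ConnectedComponent) :
    ∃ y, T.Adj x y ∧ ∀ v ∈ C.supp, (v : V) ∈ verticesBeyond T β x y := by
  obtain ⟨v₀, rfl⟩ := C.exists_rep
  obtain ⟨t₀, ht₀⟩ := htd.2.1 v₀
  have hxt₀ : x ≠ t₀ := by
    rintro rfl
    exact v₀.2 ht₀
  obtain ⟨y, hxy, hy⟩ := exists_adj_mem_farSide htd.1.connected hxt₀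
  have hv₀ : (v₀ : V) ∈ verticesBeyond T β x y :=
    (htd.mem_verticesBeyond_or v₀.2 hxy).resolve_right fun h =>
      htd.1.not_mem_farSide_swap hxy hy (h t₀ ht₀)
  refine ⟨y, hxy, fun v hv => ?_⟩
  exact Reachable.mem_of_adj_closed (S := {v : ↥(β x)ᶜ | (v : V) ∈ verticesBeyond T β x y})
    (fun ⦃u w⦄ huw hu => htd.mem_verticesBeyond_of_adj hxy huw w.2 hu)
    (ConnectedComponent.exact hv).symm hv₀

end IsTreeDecomposition

end TreeDecomposition

section HeavyArcs

variable {V ι : Type} {G : SimpleGraph V} {T : SimpleGraph ι} {β : ι → Set V} {W : Set V}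
  {x y z : ι}

def IsHeavyArc (T : SimpleGraph ι) (β : ι → Set V) (W : Set V) (x y : ι) : Prop :=
  T.Adj x y ∧ W.ncard < 2 * (W ∩ verticesBeyond T β x y).ncard

theorem IsTreeDecomposition.not_isHeavyArc_swap [Finite V] (htd : IsTreeDecomposition G T β)
    (h : IsHeavyArc T β W x y) : ¬ IsHeavyArc T β W y x := by
  intro h'
  have hdisj : Disjoint (W ∩ verticesBeyond T β x y) (W ∩ verticesBeyond T β y x) :=
    (htd.disjoint_verticesBeyond h.1).mono Set.inter_subset_right Set.inter_subset_right
  have hle : (W ∩ verticesBeyond T β x y ∪ W ∩ verticesBeyond T β y x).ncard ≤ W.ncard :=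
    Set.ncard_le_ncard (Set.union_subset Set.inter_subset_left Set.inter_subset_left)
  rw [Set.ncard_union_eq hdisj] at hle
  have := h.2
  have := h'.2
  omega

theorem IsTreeDecomposition.exists_isHeavyArc [Finite V] (htd : IsTreeDecomposition G T β)
    (C : (G.induce (β x)ᶜ).ConnectedComponent)
    (hC : W.ncard < 2 * {w : ↥(β x)ᶜ | w ∈ C.supp ∧ (w : V) ∈ W}.ncard) :
    ∃ y, IsHeavyArc T β W x y := by
  obtain ⟨y, hxy, hC_sub⟩ := htd.exists_supp_subset_verticesBeyond C
  have hsub : Subtype.val '' {w : ↥(β x)ᶜ | w ∈ C.supp ∧ (w : V) ∈ W} ⊆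
      W ∩ verticesBeyond T β x y := by
    rintro _ ⟨w, ⟨hwC, hwW⟩, rfl⟩
    exact ⟨hwW, hC_sub w hwC⟩
  refine ⟨y, hxy, hC.trans_le ?_⟩
  rw [← Set.ncard_image_of_injective _ Subtype.val_injective]
  exact Nat.mul_le_mul_left 2 (Set.ncard_le_ncard hsub)

theorem IsHeavyArc.sum_dist_lt [Finite V] (hT : T.IsTree) {bag : V → ι}
    (hbag : ∀ v, v ∈ β (bag v)) (hxy : IsHeavyArc T β W x y) (hyz : IsHeavyArc T β W y z)
    (hzx : z ≠ x) :
    ∑ w ∈ (Set.toFinite (W ∩ verticesBeyond T β y z)).toFinset, T.dist z (bag w) <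
      ∑ w ∈ (Set.toFinite (W ∩ verticesBeyond T β x y)).toFinset, T.dist y (bag w) := by
  have hne : (W ∩ verticesBeyond T β y z).Nonempty := by
    have := hyz.2
    exact Set.nonempty_of_ncard_ne_zero (by omega)
  calc ∑ w ∈ (Set.toFinite (W ∩ verticesBeyond T β y z)).toFinset, T.dist z (bag w)
      < ∑ w ∈ (Set.toFinite (W ∩ verticesBeyond T β y z)).toFinset, T.dist y (bag w) := by
        refine Finset.sum_lt_sum_of_nonempty (by simpa using hne) fun w hw => ?_
        rw [Set.Finite.mem_toFinset] at hw
        exact hT.dist_lt_of_mem_farSide hyz.1 (hw.2 _ (hbag w))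
    _ ≤ ∑ w ∈ (Set.toFinite (W ∩ verticesBeyond T β x y)).toFinset, T.dist y (bag w) := by
        refine Finset.sum_le_sum_of_subset (Set.Finite.toFinset_subset_toFinset.mpr ?_)
        exact Set.inter_subset_inter_right _ (verticesBeyond_subset hT hxy.1 hyz.1 hzx)

theorem IsTreeDecomposition.not_forall_exists_isHeavyArc [Finite V]
    (htd : IsTreeDecomposition G T β) (W : Set V) : ¬ ∀ x, ∃ y, IsHeavyArc T β W x y := by
  intro hout
  choose bag hbag using htd.2.1
  let potential : ι × ι → ℕ := fun a =>
    ∑ w ∈ (Set.toFinite (W ∩ verticesBeyond T β a.1 a.2)).toFinset, T.dist a.2 (bag w)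
  obtain ⟨x₀⟩ := htd.1.nonempty
  obtain ⟨y₀, h₀⟩ := hout x₀
  obtain ⟨⟨x, y⟩, hxy, hmin⟩ :=
    (measure potential).wf.has_min {a | IsHeavyArc T β W a.1 a.2} ⟨(x₀, y₀), h₀⟩
  obtain ⟨z, hyz⟩ := hout y
  have hzx : z ≠ x := by
    rintro rfl
    exact htd.not_isHeavyArc_swap hxy hyz
  exact hmin (y, z) hyz (IsHeavyArc.sum_dist_lt htd.1 hbag hxy hyz hzx)

end HeavyArcs

/-- For every tree decomposition `(T, β)` of `G` and every set of vertices `W`, there is a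
node `x` such that each connected component of `G` minus the bag `β x` contains at most
`|W| / 2` vertices of `W`. -/
theorem exists_balanced_bag {V ι : Type} [Fintype V] (G : SimpleGraph V)
    (T : SimpleGraph ι) (β : ι → Set V)
    (htd : IsTreeDecomposition G T β) (W : Set V) :
    ∃ x : ι, ∀ C : (G.induce ((β x)ᶜ)).ConnectedComponent,
      2 * {w : ↥((β x)ᶜ) | w ∈ C.supp ∧ (w : V) ∈ W}.ncard ≤ W.ncard := by
  by_contra! h
  choose C hC using h
  exact htd.not_forall_exists_isHeavyArc W fun x => htd.exists_isHeavyArc (C x) (hC x)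
end

section
/- Let G be a finite co-bipartite graph, with V(G) = A ∪ B where A and B are cliques. Then tw(G) = pw(G). -/
open SimpleGraph

/-- The width of a decomposition with bags `β`: the maximum of `|β x| - 1` over all nodes. -/
noncomputable def decompWidth {V ι : Type} (β : ι → Set V) : ℕ :=
  ⨆ x : ι, ((β x).ncard - 1)

/-- The treewidth of `G`: the minimum width of a tree decomposition of `G`. -/
noncomputable def treewidth {V : Type} (G : SimpleGraph V) : ℕ :=
  sInf { k : ℕ | ∃ (ι : Type) (T : SimpleGraph ι) (β : ι → Set V),
    IsTreeDecomposition G T β ∧ decompWidth β = k }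

/-- A path decomposition of `G` with bags `β p_1, …, β p_r`: every vertex is in some bag,
both endpoints of every edge lie in a common bag, and the bags containing a fixed vertex
form a contiguous interval. -/
def IsPathDecomposition {V : Type} (G : SimpleGraph V) (r : ℕ) (β : Fin r → Set V) : Prop :=
  (∀ v : V, ∃ x : Fin r, v ∈ β x) ∧
  (∀ ⦃u v : V⦄, G.Adj u v → ∃ x : Fin r, u ∈ β x ∧ v ∈ β x) ∧
  (∀ (v : V) (i j k : Fin r), i ≤ j → j ≤ k → v ∈ β i → v ∈ β k → v ∈ β j)

/-- The pathwidth of `G`: the minimum width of a path decomposition of `G`. -/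
noncomputable def pathwidth {V : Type} (G : SimpleGraph V) : ℕ :=
  sInf { k : ℕ | ∃ (r : ℕ) (β : Fin (r + 1) → Set V),
    IsPathDecomposition G (r + 1) β ∧ decompWidth β = k }


/-
Restrict an optimal tree decomposition `(T, β)` to the path of `T` between nodes `a` and `b`
with `A ⊆ β a` and `B ⊆ β b`; these exist by the Helly property of subtrees of a tree, since the
subtrees `{x | v ∈ β x}` of the vertices of a clique pairwise meet. Along the path the bags
containing a vertex still form an interval, because subtrees are convex. An edge `uv` with
`u ∈ β a` and `v ∈ β b` is still covered: the `a`–`b` path is the shortening of a walk running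
through the subtree of `u` to a common node and then through the subtree of `v`, so it passes
from one subtree to the other at a node of both. Hence the bags along the path form a path
decomposition that is no wider; conversely, a path decomposition is a tree decomposition over a
path graph.
-/

namespace SimpleGraph

variable {V : Type*} {G : SimpleGraph V} {S S₁ S₂ : Set V}

lemma Walk.mem_sym2_of_mem_edges {x y : V} {W : G.Walk x y} (hW : ∀ z ∈ W.support, z ∈ S)
    {e : Sym2 V} (he : e ∈ W.edges) : e ∈ S.sym2 := by
  induction e using Sym2.ind with
  | _ u v =>
    exact ⟨hW u (W.fst_mem_support_of_mem_edges he), hW v (W.snd_mem_support_of_mem_edges he)⟩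

lemma Walk.exists_mem_inter_of_forall_mem_sym2 :
    ∀ {a b : V} (W : G.Walk a b), a ∈ S₁ → b ∈ S₂ →
      (∀ e ∈ W.edges, e ∈ S₁.sym2 ∨ e ∈ S₂.sym2) → ∃ z ∈ W.support, z ∈ S₁ ∩ S₂
  | _, _, .nil, ha, hb, _ => ⟨_, List.mem_singleton_self _, ha, hb⟩
  | _, _, .cons _ W, ha, hb, hW => by
    rcases hW _ List.mem_cons_self with ⟨-, hc⟩ | ⟨ha₂, -⟩
    · obtain ⟨z, hz, hzS⟩ := W.exists_mem_inter_of_forall_mem_sym2 hc hb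
        fun e he => hW e (List.mem_cons_of_mem _ he)
      exact ⟨z, List.mem_cons_of_mem _ hz, hzS⟩
    · exact ⟨_, List.mem_cons_self, ha, ha₂⟩

lemma exists_walk_of_connected_induce (hS : (G.induce S).Connected) {x y : V} (hx : x ∈ S)
    (hy : y ∈ S) : ∃ W : G.Walk x y, ∀ z ∈ W.support, z ∈ S := by
  obtain ⟨W⟩ := hS.preconnected ⟨x, hx⟩ ⟨y, hy⟩
  let f : G.induce S →g G := ⟨Subtype.val, id⟩
  refine ⟨(W.map f).copy rfl rfl, fun z hz => ?_⟩
  rw [Walk.support_copy, Walk.support_map, List.mem_map] at hz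
  obtain ⟨z, -, rfl⟩ := hz
  exact z.2

lemma IsAcyclic.eq_bypass [DecidableEq V] (hG : G.IsAcyclic) {x y : V} {P : G.Walk x y}
    (hP : P.IsPath) (W : G.Walk x y) : P = W.bypass :=
  congrArg Subtype.val ((hG.subsingleton_path x y).elim ⟨P, hP⟩ ⟨W.bypass, W.bypass_isPath⟩)

lemma IsAcyclic.support_subset_of_connected_induce (hG : G.IsAcyclic)
    (hS : (G.induce S).Connected) {x y : V} (hx : x ∈ S) (hy : y ∈ S) {P : G.Walk x y}
    (hP : P.IsPath) : ∀ z ∈ P.support, z ∈ S := by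
  classical
  obtain ⟨W, hW⟩ := exists_walk_of_connected_induce hS hx hy
  rw [hG.eq_bypass hP W]
  exact fun z hz => hW z (W.support_bypass_subset_support hz)

lemma IsAcyclic.exists_mem_support_inter (hG : G.IsAcyclic) (h₁ : (G.induce S₁).Connected)
    (h₂ : (G.induce S₂).Connected) (h₁₂ : (S₁ ∩ S₂).Nonempty) {a b : V} (ha : a ∈ S₁)
    (hb : b ∈ S₂) {P : G.Walk a b} (hP : P.IsPath) : ∃ z ∈ P.support, z ∈ S₁ ∩ S₂ := by
  classical
  obtain ⟨t, ht₁, ht₂⟩ := h₁₂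
  obtain ⟨W₁, hW₁⟩ := exists_walk_of_connected_induce h₁ ha ht₁
  obtain ⟨W₂, hW₂⟩ := exists_walk_of_connected_induce h₂ ht₂ hb
  refine P.exists_mem_inter_of_forall_mem_sym2 ha hb fun e he => ?_
  rw [hG.eq_bypass hP (W₁.append W₂)] at he
  rcases List.mem_append.1 (Walk.edges_append W₁ W₂ ▸ Walk.edges_bypass_subset_edges _ he)
    with he | he
  · exact .inl (Walk.mem_sym2_of_mem_edges hW₁ he)
  · exact .inr (Walk.mem_sym2_of_mem_edges hW₂ he)

lemma IsAcyclic.connected_induce_inter (hG : G.IsAcyclic) (h₁ : (G.induce S₁).Connected)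
    (h₂ : (G.induce S₂).Connected) (h₁₂ : (S₁ ∩ S₂).Nonempty) :
    (G.induce (S₁ ∩ S₂)).Connected := by
  classical
  have := h₁₂.to_subtype
  refine ⟨?_⟩
  rintro ⟨x, hx₁, hx₂⟩ ⟨y, hy₁, hy₂⟩
  obtain ⟨W, hW⟩ := exists_walk_of_connected_induce h₁ hx₁ hy₁
  exact ⟨W.bypass.induce (S₁ ∩ S₂) fun z hz => ⟨hW z (W.support_bypass_subset_support hz),
    hG.support_subset_of_connected_induce h₂ hx₂ hy₂ W.bypass_isPath z hz⟩⟩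

lemma IsAcyclic.inter_inter_nonempty {S₀ : Set V} (hG : G.IsAcyclic)
    (h₀ : (G.induce S₀).Connected) (h₁ : (G.induce S₁).Connected)
    (h₂ : (G.induce S₂).Connected) (h₀₁ : (S₀ ∩ S₁).Nonempty) (h₀₂ : (S₀ ∩ S₂).Nonempty)
    (h₁₂ : (S₁ ∩ S₂).Nonempty) : (S₀ ∩ S₁ ∩ S₂).Nonempty := by
  classical
  obtain ⟨p, hp₀, hp₁⟩ := h₀₁
  obtain ⟨q, hq₀, hq₂⟩ := h₀₂
  obtain ⟨W, hW⟩ := exists_walk_of_connected_induce h₀ hp₀ hq₀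
  obtain ⟨z, hz, hz₁, hz₂⟩ := hG.exists_mem_support_inter h₁ h₂ h₁₂ hp₁ hq₂ W.bypass_isPath
  exact ⟨z, ⟨hW z (W.support_bypass_subset_support hz), hz₁⟩, hz₂⟩

/-- Helly property of subtrees; the extra subtree `R` is what makes the induction go through. -/
lemma IsAcyclic.exists_mem_forall_mem_of_pairwise_inter_nonempty {ι : Type*}
    (hG : G.IsAcyclic) {s : Finset ι} {S : ι → Set V} (hS : ∀ i ∈ s, (G.induce (S i)).Connected)
    (hs : ∀ i ∈ s, ∀ j ∈ s, (S i ∩ S j).Nonempty) {R : Set V} (hR : (G.induce R).Connected)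
    (hRs : ∀ i ∈ s, (R ∩ S i).Nonempty) : ∃ x ∈ R, ∀ i ∈ s, x ∈ S i := by
  classical
  induction s using Finset.induction_on generalizing R with
  | empty =>
    obtain ⟨⟨x, hx⟩⟩ := hR.nonempty
    exact ⟨x, hx, by simp⟩
  | insert k s _ ih =>
    have hk := Finset.mem_insert_self k s
    have hs' : ∀ i ∈ s, i ∈ insert k s := fun i => Finset.mem_insert_of_mem
    obtain ⟨x, ⟨hxR, hxk⟩, hxs⟩ := ih (fun i hi => hS i (hs' i hi))
      (fun i hi j hj => hs i (hs' i hi) j (hs' j hj))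
      (hG.connected_induce_inter hR (hS k hk) (hRs k hk)) fun i hi =>
        hG.inter_inter_nonempty hR (hS k hk) (hS i (hs' i hi)) (hRs k hk) (hRs i (hs' i hi))
          (hs k hk i (hs' i hi))
    exact ⟨x, hxR, (Finset.forall_mem_insert _ _ _).2 ⟨hxk, hxs⟩⟩

lemma IsAcyclic.getVert_mem_of_le_of_le (hG : G.IsAcyclic) (hS : (G.induce S).Connected)
    {a b : V} {P : G.Walk a b} (hP : P.IsPath) {i j k : ℕ} (hij : i ≤ j) (hjk : j ≤ k)
    (hi : P.getVert i ∈ S) (hk : P.getVert k ∈ S) : P.getVert j ∈ S := by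
  have hend : (P.drop i).getVert (k - i) ∈ S := by
    rwa [Walk.drop_getVert, Nat.add_sub_cancel' (hij.trans hjk)]
  have := hG.support_subset_of_connected_induce hS hi hend ((hP.drop i).take (k - i)) _
    (Walk.getVert_mem_support _ (j - i))
  rwa [Walk.take_getVert, Walk.drop_getVert, min_eq_right (by omega),
    Nat.add_sub_cancel' hij] at this

lemma mem_edges_pathGraph_of_le_of_lt {n : ℕ} {u v x y : Fin n} (huv : u.val + 1 = v.val)
    (W : (pathGraph n).Walk x y) (hx : x ≤ u) (hy : u < y) : s(u, v) ∈ W.edges := by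
  obtain ⟨d, hd, hd₁, hd₂⟩ := W.exists_boundary_dart {w | w ≤ u} hx (not_le.2 hy)
  have hadj := pathGraph_adj.1 d.adj
  simp only [Set.mem_ofPred_eq, not_le, Fin.le_def] at hd₁ hd₂
  obtain ⟨rfl, rfl⟩ : d.fst = u ∧ d.snd = v := ⟨Fin.ext (by omega), Fin.ext (by omega)⟩
  exact W.edges_eq_map_darts ▸ List.mem_map_of_mem hd

lemma isAcyclic_pathGraph (n : ℕ) : (pathGraph n).IsAcyclic := by
  refine isAcyclic_iff_forall_adj_isBridge.2 fun u v huv => ?_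
  rcases pathGraph_adj.1 huv with h | h
  · exact isBridge_iff_forall_walk_mem_edges.2 fun W =>
      mem_edges_pathGraph_of_le_of_lt h W le_rfl (Fin.lt_def.2 (by omega))
  · rw [Sym2.eq_swap]
    exact isBridge_iff_forall_walk_mem_edges.2 fun W =>
      mem_edges_pathGraph_of_le_of_lt h W le_rfl (Fin.lt_def.2 (by omega))

lemma isTree_pathGraph (n : ℕ) : (pathGraph (n + 1)).IsTree :=
  ⟨pathGraph_connected n, isAcyclic_pathGraph _⟩

lemma reachable_induce_pathGraph_of_ordConnected {n : ℕ} {S : Set (Fin n)} (hS : S.OrdConnected)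
    {x y : Fin n} (hx : x ∈ S) (hy : y ∈ S) (hxy : x ≤ y) :
    ((pathGraph n).induce S).Reachable ⟨x, hx⟩ ⟨y, hy⟩ := by
  obtain ⟨m, hm⟩ := y
  induction m with
  | zero =>
    obtain rfl : x = ⟨0, hm⟩ := Fin.ext (by rw [Fin.le_def] at hxy; simpa using hxy)
    rfl
  | succ m ih =>
    rcases hxy.eq_or_lt with rfl | hlt
    · rfl
    · rw [Fin.lt_def] at hlt
      have hm' : m < n := by omega
      have hxm : x ≤ ⟨m, hm'⟩ := Fin.le_def.2 (by simp only at hlt ⊢; omega)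
      have hmS : (⟨m, hm'⟩ : Fin n) ∈ S := hS.out hx hy ⟨hxm, Fin.le_def.2 (by simp)⟩
      exact (ih hm' hmS hxm).trans (induce_adj.2 (pathGraph_adj.2 (.inl rfl))).reachable

lemma connected_induce_pathGraph_of_ordConnected {n : ℕ} {S : Set (Fin n)} (hS : S.OrdConnected)
    (hne : S.Nonempty) : ((pathGraph n).induce S).Connected := by
  have := hne.to_subtype
  refine ⟨?_⟩
  rintro ⟨x, hx⟩ ⟨y, hy⟩
  rcases le_total x y with hxy | hyx
  · exact reachable_induce_pathGraph_of_ordConnected hS hx hy hxy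
  · exact (reachable_induce_pathGraph_of_ordConnected hS hy hx hyx).symm

end SimpleGraph

open SimpleGraph

section Decompositions

variable {V : Type} {G : SimpleGraph V}

lemma decompWidth_comp_le {ι κ : Type} [Finite V] (β : ι → Set V) (f : κ → ι) :
    decompWidth (β ∘ f) ≤ decompWidth β :=
  ciSup_le' fun i => le_ciSup (f := fun x => (β x).ncard - 1)
    ⟨Nat.card V, Set.forall_mem_range.2 fun _ => (Nat.sub_le _ _).trans (Set.ncard_le_card _)⟩
    (f i)

lemma IsPathDecomposition.isTreeDecomposition {r : ℕ} {β : Fin (r + 1) → Set V}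
    (h : IsPathDecomposition G (r + 1) β) : IsTreeDecomposition G (pathGraph (r + 1)) β := by
  obtain ⟨hcov, hedge, hint⟩ := h
  exact ⟨isTree_pathGraph r, hcov, hedge, fun v => connected_induce_pathGraph_of_ordConnected
    ⟨fun i hi k hk j hj => hint v i j k hj.1 hj.2 hi hk⟩ (hcov v)⟩

lemma IsTreeDecomposition.exists_subset_of_isClique [Finite V] {ι : Type} {T : SimpleGraph ι}
    {β : ι → Set V} (h : IsTreeDecomposition G T β) {C : Set V} (hC : G.IsClique C) :
    ∃ x, C ⊆ β x := by
  obtain ⟨hT, hcov, hedge, hconn⟩ := h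
  have hpair : ∀ u ∈ C.toFinite.toFinset, ∀ v ∈ C.toFinite.toFinset,
      ({x | u ∈ β x} ∩ {x | v ∈ β x}).Nonempty := by
    intro u hu v hv
    rw [Set.Finite.mem_toFinset] at hu hv
    obtain rfl | huv := eq_or_ne u v
    · obtain ⟨x, hx⟩ := hcov u
      exact ⟨x, hx, hx⟩
    · exact hedge (hC hu hv huv)
  obtain ⟨x, -, hx⟩ := hT.isAcyclic.exists_mem_forall_mem_of_pairwise_inter_nonempty
    (fun v _ => hconn v) hpair ((induceUnivIso T).connected_iff.2 hT.connected)
    (fun v _ => by rw [Set.univ_inter]; exact hcov v)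
  exact ⟨x, fun v hv => hx v (C.toFinite.mem_toFinset.2 hv)⟩

lemma IsTreeDecomposition.isPathDecomposition_getVert {ι : Type} {T : SimpleGraph ι}
    {β : ι → Set V} (h : IsTreeDecomposition G T β) {a b : ι} {P : T.Walk a b} (hP : P.IsPath)
    (hab : β a ∪ β b = Set.univ) :
    IsPathDecomposition G (P.length + 1) (fun i => β (P.getVert i)) := by
  obtain ⟨hT, hcov, hedge, hconn⟩ := h
  have hmem (v : V) : v ∈ β a ∨ v ∈ β b := by
    rw [← Set.mem_union, hab]
    trivial
  have hfirst : ∀ v ∈ β a, v ∈ β (P.getVert (0 : Fin (P.length + 1))) := by simp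
  have hlast : ∀ v ∈ β b, v ∈ β (P.getVert (Fin.last P.length)) := by simp
  have hcross {u v : V} (huv : G.Adj u v) (hu : u ∈ β a) (hv : v ∈ β b) :
      ∃ i : Fin (P.length + 1), u ∈ β (P.getVert i) ∧ v ∈ β (P.getVert i) := by
    obtain ⟨z, hz, hzu, hzv⟩ :=
      hT.isAcyclic.exists_mem_support_inter (hconn u) (hconn v) (hedge huv) hu hv hP
    obtain ⟨n, rfl, hn⟩ := Walk.mem_support_iff_exists_getVert.1 hz
    exact ⟨⟨n, Nat.lt_succ_of_le hn⟩, hzu, hzv⟩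
  refine ⟨fun v => ?_, fun u v huv => ?_, fun v i j k hij hjk hi hk =>
    hT.isAcyclic.getVert_mem_of_le_of_le (hconn v) hP hij hjk hi hk⟩
  · rcases hmem v with hv | hv
    exacts [⟨0, hfirst v hv⟩, ⟨Fin.last _, hlast v hv⟩]
  · rcases hmem u with hu | hu <;> rcases hmem v with hv | hv
    · exact ⟨0, hfirst u hu, hfirst v hv⟩
    · exact hcross huv hu hv
    · obtain ⟨i, hvi, hui⟩ := hcross huv.symm hv hu
      exact ⟨i, hui, hvi⟩
    · exact ⟨Fin.last _, hlast u hu, hlast v hv⟩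

lemma IsTreeDecomposition.exists_isPathDecomposition_of_cobipartite [Finite V] {ι : Type}
    {T : SimpleGraph ι} {β : ι → Set V} (h : IsTreeDecomposition G T β) {A B : Set V}
    (hAB : A ∪ B = Set.univ) (hA : G.IsClique A) (hB : G.IsClique B) :
    ∃ (r : ℕ) (γ : Fin (r + 1) → Set V),
      IsPathDecomposition G (r + 1) γ ∧ decompWidth γ ≤ decompWidth β := by
  classical
  obtain ⟨a, hAa⟩ := h.exists_subset_of_isClique hA
  obtain ⟨b, hBb⟩ := h.exists_subset_of_isClique hB
  obtain ⟨W⟩ := h.1.connected.preconnected a b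
  have hab : β a ∪ β b = Set.univ := Set.univ_subset_iff.1 (hAB ▸ Set.union_subset_union hAa hBb)
  exact ⟨_, _, h.isPathDecomposition_getVert W.bypass_isPath hab, decompWidth_comp_le β _⟩

lemma treewidth_le_decompWidth {ι : Type} {T : SimpleGraph ι} {β : ι → Set V}
    (h : IsTreeDecomposition G T β) : treewidth G ≤ decompWidth β :=
  Nat.sInf_le ⟨ι, T, β, h, rfl⟩

lemma pathwidth_le_decompWidth {r : ℕ} {β : Fin (r + 1) → Set V}
    (h : IsPathDecomposition G (r + 1) β) : pathwidth G ≤ decompWidth β :=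
  Nat.sInf_le ⟨r, β, h, rfl⟩

lemma exists_isPathDecomposition_decompWidth_eq_pathwidth (G : SimpleGraph V) :
    ∃ (r : ℕ) (β : Fin (r + 1) → Set V),
      IsPathDecomposition G (r + 1) β ∧ decompWidth β = pathwidth G := by
  have hone : IsPathDecomposition G 1 fun _ => Set.univ :=
    ⟨fun _ => ⟨0, trivial⟩, fun _ _ _ => ⟨0, trivial, trivial⟩, fun _ _ _ _ _ _ _ _ => trivial⟩
  exact Nat.sInf_mem (s := {k | ∃ (r : ℕ) (β : Fin (r + 1) → Set V),
    IsPathDecomposition G (r + 1) β ∧ decompWidth β = k}) ⟨_, 0, _, hone, rfl⟩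

lemma treewidth_le_pathwidth (G : SimpleGraph V) : treewidth G ≤ pathwidth G := by
  obtain ⟨r, β, h, hw⟩ := exists_isPathDecomposition_decompWidth_eq_pathwidth G
  exact hw ▸ treewidth_le_decompWidth h.isTreeDecomposition

lemma exists_isTreeDecomposition_decompWidth_eq_treewidth (G : SimpleGraph V) :
    ∃ (ι : Type) (T : SimpleGraph ι) (β : ι → Set V),
      IsTreeDecomposition G T β ∧ decompWidth β = treewidth G := by
  obtain ⟨r, β, h, -⟩ := exists_isPathDecomposition_decompWidth_eq_pathwidth G
  exact Nat.sInf_mem (s := {k | ∃ (ι : Type) (T : SimpleGraph ι) (β : ι → Set V),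
    IsTreeDecomposition G T β ∧ decompWidth β = k}) ⟨_, _, _, _, h.isTreeDecomposition, rfl⟩

end Decompositions

/-- If the vertex set of the finite graph `G` is the union of two cliques `A` and `B`
(i.e. `G` is co-bipartite), then the treewidth of `G` equals its pathwidth. -/
theorem treewidth_eq_pathwidth_of_cobipartite {V : Type} [Fintype V] (G : SimpleGraph V)
    (A B : Set V) (hUnion : A ∪ B = Set.univ)
    (hA : G.IsClique A) (hB : G.IsClique B) :
    treewidth G = pathwidth G := by
  refine le_antisymm (treewidth_le_pathwidth G) ?_
  obtain ⟨ι, T, β, hβ, hw⟩ := exists_isTreeDecomposition_decompWidth_eq_treewidth G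
  obtain ⟨r, γ, hγ, hle⟩ := hβ.exists_isPathDecomposition_of_cobipartite hUnion hA hB
  calc pathwidth G ≤ decompWidth γ := pathwidth_le_decompWidth hγ
    _ ≤ decompWidth β := hle
    _ = treewidth G := hw
end

section
/- Let G be a finite simple graph containing at least one edge, and let H be the graph obtained from G by subdividing one edge {u, v}, i.e., removing the edge {u, v} and adding a new vertex w together with the edges {u, w} and {w, v}. Then cw(H) = cw(G). -/
open SimpleGraph

/-- The cutwidth of `G`: the minimum over linear orderings `f` of the vertices of the
maximum over positions `i` of the number of edges `{v, w}` with `f v ≤ i < f w`. -/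
noncomputable def cutwidth {V : Type} [Fintype V] (G : SimpleGraph V) : ℕ :=
  sInf { k : ℕ | ∃ f : V ≃ Fin (Fintype.card V),
    ∀ i : Fin (Fintype.card V),
      {e : Sym2 V | e ∈ G.edgeSet ∧ ∃ u v : V, e = s(u, v) ∧ f u ≤ i ∧ i < f v}.ncard ≤ k }

/-- The graph obtained from `G` by subdividing the edge `{u, v}`: the edge `{u, v}` is
removed and a new vertex `none` is added, adjacent exactly to `u` and `v`. -/
def subdivideEdge {V : Type} (G : SimpleGraph V) (u v : V) : SimpleGraph (Option V) :=
  SimpleGraph.fromRel (fun a b =>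
    match a, b with
    | some x, some y => G.Adj x y ∧ s(x, y) ≠ s(u, v)
    | none, some x => x = u ∨ x = v
    | _, _ => False)

/-!
A layout may be given by any injective positions `V → ℕ`; its width is the largest edge
boundary of a prefix set. For a vertex set `S` of the subdivided graph, the boundaries of `S`
and of its trace on `V` differ only in that `uv` is replaced by `uw` and `wv`. The path `u w v`
crosses a cut at least as often as the edge `uv`, and exactly as often unless `w` alone is
separated from both `u` and `v`. So deleting `w` from a layout never increases the width, and
inserting `w` right after the earlier of `u`, `v` never separates `w` in that way.
-/

open Function

namespace SimpleGraph

variable {V : Type*} (G : SimpleGraph V)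

def edgeBoundary (S : Set V) : Set (Sym2 V) :=
  {e | e ∈ G.edgeSet ∧ ∃ a b, e = s(a, b) ∧ a ∈ S ∧ b ∉ S}

variable {G}

@[simp]
lemma mk_mem_edgeBoundary {S : Set V} {a b : V} :
    s(a, b) ∈ G.edgeBoundary S ↔ G.Adj a b ∧ (a ∈ S ↔ b ∉ S) := by
  simp only [edgeBoundary, Set.mem_ofPred_eq, mem_edgeSet, Sym2.eq_iff]
  constructor
  · rintro ⟨hab, a', b', (⟨rfl, rfl⟩ | ⟨rfl, rfl⟩), ha, hb⟩ <;> tauto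
  · rintro ⟨hab, hS⟩
    by_cases ha : a ∈ S
    · exact ⟨hab, a, b, Or.inl ⟨rfl, rfl⟩, ha, hS.1 ha⟩
    · exact ⟨hab, b, a, Or.inr ⟨rfl, rfl⟩, by tauto, ha⟩

@[simp]
lemma edgeBoundary_univ : G.edgeBoundary Set.univ = ∅ := by
  ext e
  simp [edgeBoundary]

lemma edgeBoundary_setOf_le {α : Type*} [LinearOrder α] (f : V → α) (i : α) :
    G.edgeBoundary {x | f x ≤ i} =
      {e | e ∈ G.edgeSet ∧ ∃ a b, e = s(a, b) ∧ f a ≤ i ∧ i < f b} := by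
  simp [edgeBoundary]

end SimpleGraph

lemma exists_equiv_fin_le_iff {V α : Type*} [Fintype V] [LinearOrder α] {p : V → α}
    (hp : Injective p) : ∃ f : V ≃ Fin (Fintype.card V), ∀ a b, f a ≤ f b ↔ p a ≤ p b := by
  let : LinearOrder V := LinearOrder.lift' p hp
  let e := (Fintype.orderIsoFinOfCardEq V rfl).symm
  exact ⟨e.toEquiv, fun _ _ => e.le_iff_le⟩

theorem cutwidth_eq_sInf_injective {V : Type} [Fintype V] (G : SimpleGraph V) :
    cutwidth G =
      sInf {k | ∃ p : V → ℕ, Injective p ∧ ∀ t, (G.edgeBoundary {x | p x ≤ t}).ncard ≤ k} := by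
  simp_rw [cutwidth, ← edgeBoundary_setOf_le]
  congr 1
  ext k
  constructor
  · rintro ⟨f, hf⟩
    refine ⟨fun x => f x, Fin.val_injective.comp f.injective, fun t => ?_⟩
    by_cases ht : t < Fintype.card V
    · simpa [Fin.le_def] using hf ⟨t, ht⟩
    · have huniv : {x | (f x : ℕ) ≤ t} = Set.univ :=
        Set.eq_univ_of_forall fun x => by simp only [Set.mem_ofPred_eq]; omega
      simp [huniv]
  · rintro ⟨p, hp, hk⟩
    obtain ⟨f, hf⟩ := exists_equiv_fin_le_iff hp
    refine ⟨f, fun i => ?_⟩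
    have hset : {x | f x ≤ i} = {x | p x ≤ p (f.symm i)} := by
      ext x
      simp [← hf]
    simpa [hset] using hk (p (f.symm i))

section Subdivide

variable {V : Type} {G : SimpleGraph V} {u v : V}

@[simp]
lemma subdivideEdge_adj_some_some {x y : V} :
    (subdivideEdge G u v).Adj (some x) (some y) ↔ G.Adj x y ∧ s(x, y) ≠ s(u, v) := by
  simp only [subdivideEdge, fromRel_adj, ne_eq, Option.some.injEq, G.adj_comm y x, Sym2.eq_swap]
  exact ⟨fun ⟨_, h⟩ => h.elim id id, fun h => ⟨h.1.ne, Or.inl h⟩⟩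

@[simp]
lemma subdivideEdge_adj_none_some {x : V} :
    (subdivideEdge G u v).Adj none (some x) ↔ x = u ∨ x = v := by
  simp [subdivideEdge]

@[simp]
lemma subdivideEdge_adj_some_none {x : V} :
    (subdivideEdge G u v).Adj (some x) none ↔ x = u ∨ x = v := by
  simp [subdivideEdge]

lemma map_some_mem_edgeBoundary_subdivideEdge {e : Sym2 V} (he : e ≠ s(u, v))
    (S : Set (Option V)) :
    e.map some ∈ (subdivideEdge G u v).edgeBoundary S ↔ e ∈ G.edgeBoundary (some ⁻¹' S) := by
  induction e using Sym2.ind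
  simp_all

lemma mem_edgeBoundary_subdivideEdge {S : Set (Option V)} {e : Sym2 (Option V)}
    (he : e ∈ (subdivideEdge G u v).edgeBoundary S) :
    (∃ e' ∈ G.edgeBoundary (some ⁻¹' S), e' ≠ s(u, v) ∧ e = e'.map some) ∨
      ∃ x, (x = u ∨ x = v) ∧ (none ∈ S ↔ some x ∉ S) ∧ e = s(none, some x) := by
  induction e using Sym2.ind with | _ a b => ?_
  rcases a with _ | x <;> rcases b with _ | y
  · simp at he
  · exact Or.inr ⟨y, by simpa using he⟩
  · refine Or.inr ⟨x, ?_⟩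
    simp only [mk_mem_edgeBoundary, subdivideEdge_adj_some_none] at he
    exact ⟨he.1, by tauto, Sym2.eq_swap⟩
  · simp only [mk_mem_edgeBoundary, subdivideEdge_adj_some_some] at he
    exact Or.inl ⟨s(x, y), by simpa using ⟨he.1.1, he.2⟩, he.1.2, rfl⟩

lemma ncard_edgeBoundary_le_subdivideEdge [Finite V] (S : Set (Option V)) :
    (G.edgeBoundary (some ⁻¹' S)).ncard ≤ ((subdivideEdge G u v).edgeBoundary S).ncard := by
  classical
  -- if `uv` crosses the cut, then so does `uw` or `wv`, according to the side of `w`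
  let F : Sym2 V → Sym2 (Option V) := fun e =>
    if e = s(u, v) then s(none, some (if (none ∈ S ↔ some u ∈ S) then v else u)) else e.map some
  have hF : ∀ e, none ∈ F e ↔ e = s(u, v) := by
    intro e
    by_cases he : e = s(u, v) <;> simp [F, he, Sym2.mem_map]
  refine Set.ncard_le_ncard_of_injOn F (fun e he => ?_) (fun e₁ _ e₂ _ heq => ?_) (Set.toFinite _)
  · by_cases heuv : e = s(u, v)
    · subst heuv
      simp only [F, if_true]
      simp only [mk_mem_edgeBoundary, Set.mem_preimage] at he
      split_ifs <;> simp <;> tauto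
    · simpa [F, heuv] using (map_some_mem_edgeBoundary_subdivideEdge heuv S).2 he
  · by_cases h₁ : e₁ = s(u, v)
    · rw [h₁, eq_comm, ← hF, ← heq, hF, h₁]
    · have h₂ : e₂ ≠ s(u, v) := fun h₂ => h₁ ((hF e₁).1 (heq ▸ (hF e₂).2 h₂))
      simp only [F, if_neg h₁, if_neg h₂] at heq
      exact Sym2.map.injective (Option.some_injective V) heq

lemma ncard_edgeBoundary_subdivideEdge_le [Finite V] (h : G.Adj u v) (S : Set (Option V))
    (hS : (some u ∈ S ↔ some v ∈ S) → (none ∈ S ↔ some u ∈ S)) :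
    ((subdivideEdge G u v).edgeBoundary S).ncard ≤ (G.edgeBoundary (some ⁻¹' S)).ncard := by
  classical
  let F : Sym2 (Option V) → Sym2 V := fun e =>
    if none ∈ e then s(u, v) else e.map (Option.getD · u)
  have hF : ∀ e : Sym2 V, F (e.map some) = e := fun e => by
    simp [F, Sym2.mem_map, Sym2.map_map]
  have hFnone : ∀ x, F s(none, some x) = s(u, v) := fun x => by simp [F]
  refine Set.ncard_le_ncard_of_injOn F (fun e he => ?_) (fun e₁ he₁ e₂ he₂ heq => ?_)
    (Set.toFinite _)
  · rcases mem_edgeBoundary_subdivideEdge he with ⟨e', he', -, rfl⟩ | ⟨x, hx, hcross, rfl⟩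
    · rwa [hF]
    · rw [hFnone, mk_mem_edgeBoundary]
      refine ⟨h, ?_⟩
      rcases hx with rfl | rfl <;> simp only [Set.mem_preimage] <;> tauto
  · rcases mem_edgeBoundary_subdivideEdge he₁ with ⟨e₁', -, hne₁, rfl⟩ | ⟨x₁, hx₁, hc₁, rfl⟩ <;>
      rcases mem_edgeBoundary_subdivideEdge he₂ with ⟨e₂', -, hne₂, rfl⟩ | ⟨x₂, hx₂, hc₂, rfl⟩
    · rw [hF, hF] at heq
      rw [heq]
    · exact absurd (by rwa [hF, hFnone] at heq) hne₁
    · exact absurd (by rwa [hF, hFnone, eq_comm] at heq) hne₂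
    · -- `uw` and `wv` cannot both cross: `hS` keeps `w` on the side of `u` and `v` when they agree
      rcases hx₁ with rfl | rfl <;> rcases hx₂ with rfl | rfl <;> first | rfl | tauto

end Subdivide

/-- Subdividing an edge of a finite graph does not change the cutwidth. -/
theorem cutwidth_subdivideEdge {V : Type} [Fintype V] (G : SimpleGraph V)
    (u v : V) (h : G.Adj u v) :
    cutwidth (subdivideEdge G u v) = cutwidth G := by
  rw [cutwidth_eq_sInf_injective, cutwidth_eq_sInf_injective]
  congr 1
  ext k
  constructor
  · rintro ⟨q, hq, hk⟩
    exact ⟨q ∘ some, hq.comp (Option.some_injective V),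
      fun t => (ncard_edgeBoundary_le_subdivideEdge _).trans (hk t)⟩
  · rintro ⟨p, hp, hk⟩
    have hpuv : p u ≠ p v := hp.ne h.ne
    -- double all positions and put the new vertex right after the earlier of `u`, `v`
    let q : Option V → ℕ := fun a => a.elim (2 * min (p u) (p v) + 1) (2 * p ·)
    have hq : Injective q := by
      rintro (_ | x) (_ | y) hxy <;> simp [q, hp.eq_iff] at hxy ⊢ <;> omega
    refine ⟨q, hq, fun t => ?_⟩
    have hpre : some ⁻¹' {b | q b ≤ t} = {x | p x ≤ t / 2} := by
      ext x
      simp only [q, Set.mem_preimage, Set.mem_ofPred_eq, Option.elim_some]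
      omega
    refine (ncard_edgeBoundary_subdivideEdge_le h _ ?_).trans (hpre ▸ hk (t / 2))
    simp only [q, Set.mem_ofPred_eq, Option.elim_some, Option.elim_none]
    omega
end
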